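/- arXiv:2108.09097 — 3 statements merged into one kernel-verified Lean document; each statement's English description precedes it below -/
import Mathlib

section
/- Let H be a bialgebra over a commutative ring R and let τ : H → H be an R-linear involution that is an algebra antimorphism and is either a coalgebra morphism or a coalgebra antimorphism. Let p_1, …, p_k ∈ H be primitive elements with τ(p_i) = p_i for all i. Then for every integer a ≥ 1, the symmetrised product v := Σ_{σ ∈ S_k} p_{σ(1)}⋯p_{σ(k)} satisfies Ψ_a^+(v) = (a·1_R)^k · v and Ψ_a^−(v) = (a·1_R)^k · v. -/
/-!
Since Δ is multiplicative, the coproduct of a product of primitives along a word `w` is the sum,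
over the unshuffles `(s, t)` of `w`, of the products along `s` and `t`; and `τ` reverses a word in
`τ`-fixed letters. Hence `Ψ_a^±` sends the product along `w` to the sum of the products along
`a ^ |w|` rearrangements of `w` (cut `w` into `a` interleaved packets, read alternately forwards
and backwards), and these rearrangements commute with renaming the letters. Each rearrangement
of the identity word is a permutation `ρ`, and `Σ_σ p_{σ ∘ ρ}` is again the symmetrised product,
so `Ψ_a^±` multiplies it by `a ^ k`.
-/

open TensorProduct

/-- Convolution product `f * g := m ∘ (f ⊗ g) ∘ Δ` of linear endomorphisms of a bialgebra. -/
noncomputable def convProd {R H : Type*} [CommRing R] [Ring H] [Bialgebra R H]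
    (f g : H →ₗ[R] H) : H →ₗ[R] H :=
  LinearMap.mul' R H ∘ₗ TensorProduct.map f g ∘ₗ Coalgebra.comul

/-- `PsiAux τ n = (Ψ_{n+1}^+, Ψ_{n+1}^−)`: the hyperoctahedral riffle-shuffle operators,
defined by `Ψ_1^+ = id`, `Ψ_1^− = τ`, `Ψ_{a+1}^+ = id * Ψ_a^−`, `Ψ_{a+1}^− = τ * Ψ_a^+`. -/
noncomputable def PsiAux {R H : Type*} [CommRing R] [Ring H] [Bialgebra R H]
    (τ : H →ₗ[R] H) : ℕ → (H →ₗ[R] H) × (H →ₗ[R] H)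
  | 0 => (LinearMap.id, τ)
  | n + 1 => (convProd LinearMap.id (PsiAux τ n).2, convProd τ (PsiAux τ n).1)

/-- The operator `Ψ_a^+` (for `a ≥ 1`). -/
noncomputable def PsiPlus {R H : Type*} [CommRing R] [Ring H] [Bialgebra R H]
    (τ : H →ₗ[R] H) (a : ℕ) : H →ₗ[R] H := (PsiAux τ (a - 1)).1

/-- The operator `Ψ_a^−` (for `a ≥ 1`). -/
noncomputable def PsiMinus {R H : Type*} [CommRing R] [Ring H] [Bialgebra R H]
    (τ : H →ₗ[R] H) (a : ℕ) : H →ₗ[R] H := (PsiAux τ (a - 1)).2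

/-- `p` is a primitive element: `Δ p = 1 ⊗ p + p ⊗ 1`. -/
def IsPrimitive (R : Type*) {H : Type*} [CommRing R] [Ring H] [Bialgebra R H] (p : H) : Prop :=
  Coalgebra.comul (R := R) p = 1 ⊗ₜ[R] p + p ⊗ₜ[R] 1

/-- `τ` is a coalgebra morphism: `Δ ∘ τ = (τ ⊗ τ) ∘ Δ` and `ε ∘ τ = ε`. -/
def IsCoalgMorph {R H : Type*} [CommRing R] [Ring H] [Bialgebra R H] (τ : H →ₗ[R] H) : Prop :=
  Coalgebra.comul ∘ₗ τ = TensorProduct.map τ τ ∘ₗ (Coalgebra.comul : H →ₗ[R] H ⊗[R] H) ∧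
    Coalgebra.counit ∘ₗ τ = (Coalgebra.counit : H →ₗ[R] R)

/-- `τ` is a coalgebra antimorphism: `Δ ∘ τ = swap ∘ (τ ⊗ τ) ∘ Δ` and `ε ∘ τ = ε`. -/
def IsCoalgAntimorph {R H : Type*} [CommRing R] [Ring H] [Bialgebra R H] (τ : H →ₗ[R] H) : Prop :=
  Coalgebra.comul ∘ₗ τ =
      (TensorProduct.comm R H H).toLinearMap ∘ₗ TensorProduct.map τ τ ∘ₗ
        (Coalgebra.comul : H →ₗ[R] H ⊗[R] H) ∧
    Coalgebra.counit ∘ₗ τ = (Coalgebra.counit : H →ₗ[R] R)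

namespace List

variable {α β : Type*}

theorem sum_flatMap {M : Type*} [AddMonoid M] (l : List α) (f : α → List M) :
    (l.flatMap f).sum = (l.map fun x => (f x).sum).sum := by
  rw [flatMap, sum_flatten, map_map]; rfl

def unshuffles : List α → List (List α × List α)
  | [] => [([], [])]
  | x :: l => l.unshuffles.flatMap fun s => [(x :: s.1, s.2), (s.1, x :: s.2)]

theorem unshuffles_map (f : α → β) (l : List α) :
    (l.map f).unshuffles = l.unshuffles.map fun s => (s.1.map f, s.2.map f) := by
  induction l with
  | nil => rfl
  | cons x l ih => simp [unshuffles, ih, flatMap_map, map_flatMap]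

theorem perm_of_mem_unshuffles {l : List α} {s : List α × List α} (hs : s ∈ l.unshuffles) :
    s.1 ++ s.2 ~ l := by
  induction l generalizing s with
  | nil => simp_all [unshuffles]
  | cons x l ih =>
    simp only [unshuffles, mem_flatMap, mem_cons, not_mem_nil, or_false] at hs
    obtain ⟨t, ht, rfl | rfl⟩ := hs
    · exact (ih ht).cons x
    · exact perm_middle.trans ((ih ht).cons x)

theorem sum_map_pow_length_unshuffles (c : ℕ) (l : List α) :
    (l.unshuffles.map fun s => c ^ s.2.length).sum = (c + 1) ^ l.length := by
  induction l with
  | nil => simp [unshuffles]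
  | cons x l ih =>
    rw [unshuffles, map_flatMap, sum_flatMap, length_cons, pow_succ, ← ih, ← sum_map_mul_right]
    exact congrArg sum (map_congr_left fun s _ => by simp [pow_succ]; ring)

end List

section Words

open List

variable {α β : Type*}

def orient (b : Bool) (l : List α) : List α := bif b then l else l.reverse

theorem orient_map (f : α → β) (b : Bool) (l : List α) :
    orient b (l.map f) = (orient b l).map f := by
  cases b <;> simp [orient]

theorem orient_perm (b : Bool) (l : List α) : orient b l ~ l := by
  cases b <;> simp [orient, reverse_perm]

/-- `psiWords n b l` lists, with multiplicity, the words into which `Ψ_{n+1}^+` (`b = true`) or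
`Ψ_{n+1}^-` (`b = false`) rearranges the word `l` in `τ`-fixed primitive letters. -/
def psiWords : ℕ → Bool → List α → List (List α)
  | 0, b, l => [orient b l]
  | n + 1, b, l => l.unshuffles.flatMap fun s => (psiWords n (!b) s.2).map (orient b s.1 ++ ·)

theorem psiWords_map (f : α → β) (n : ℕ) (b : Bool) (l : List α) :
    psiWords n b (l.map f) = (psiWords n b l).map (map f) := by
  induction n generalizing b l with
  | zero => simp [psiWords, orient_map]
  | succ n ih =>
    simp [psiWords, unshuffles_map, flatMap_map, map_flatMap, ih, orient_map, Function.comp_def]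

theorem perm_of_mem_psiWords {n : ℕ} {b : Bool} {l m : List α} (hm : m ∈ psiWords n b l) :
    m ~ l := by
  induction n generalizing b l m with
  | zero =>
    rw [psiWords, mem_singleton] at hm
    exact hm ▸ orient_perm b l
  | succ n ih =>
    simp only [psiWords, mem_flatMap, mem_map] at hm
    obtain ⟨s, hs, m', hm', rfl⟩ := hm
    exact ((orient_perm b s.1).append (ih hm')).trans (perm_of_mem_unshuffles hs)

theorem length_psiWords (n : ℕ) (b : Bool) (l : List α) :
    (psiWords n b l).length = (n + 1) ^ l.length := by
  induction n generalizing b l with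
  | zero => simp [psiWords]
  | succ n ih =>
    rw [psiWords, length_flatMap, ← sum_map_pow_length_unshuffles]
    simp [ih]

end Words

section Bialgebra

open List

variable {R H : Type*} [CommRing R] [Ring H] [Bialgebra R H]

/-- `psi τ n true = Ψ_{n+1}^+` and `psi τ n false = Ψ_{n+1}^-`. -/
noncomputable def psi (τ : H →ₗ[R] H) (n : ℕ) (b : Bool) : H →ₗ[R] H :=
  bif b then (PsiAux τ n).1 else (PsiAux τ n).2

theorem psi_zero (τ : H →ₗ[R] H) (b : Bool) : psi τ 0 b = bif b then LinearMap.id else τ := by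
  cases b <;> rfl

theorem psi_succ (τ : H →ₗ[R] H) (n : ℕ) (b : Bool) :
    psi τ (n + 1) b = convProd (psi τ 0 b) (psi τ n !b) := by
  cases b <;> rfl

theorem map_list_prod_of_antimorph (τ : H →ₗ[R] H) (halg1 : τ 1 = 1)
    (halgmul : ∀ x y : H, τ (x * y) = τ y * τ x) (l : List H) :
    τ l.prod = (l.map τ).reverse.prod := by
  induction l with
  | nil => simpa using halg1
  | cons x l ih => simp [halgmul, ih]

theorem comul_list_prod_of_isPrimitive (l : List H) (hl : ∀ x ∈ l, IsPrimitive R x) :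
    Coalgebra.comul (R := R) l.prod = (l.unshuffles.map fun s => s.1.prod ⊗ₜ[R] s.2.prod).sum := by
  induction l with
  | nil => simp [unshuffles, Algebra.TensorProduct.one_def]
  | cons x l ih =>
    rw [prod_cons, Bialgebra.comul_mul, ih fun y hy => hl y (mem_cons_of_mem x hy),
      hl x mem_cons_self, unshuffles, map_flatMap, sum_flatMap, ← sum_map_mul_left]
    refine congrArg sum (map_congr_left fun s _ => ?_)
    simp [add_mul, Algebra.TensorProduct.tmul_mul_tmul, add_comm]

theorem convProd_list_prod_of_isPrimitive (f g : H →ₗ[R] H) (l : List H)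
    (hl : ∀ x ∈ l, IsPrimitive R x) :
    convProd f g l.prod = (l.unshuffles.map fun s => f s.1.prod * g s.2.prod).sum := by
  simp [convProd, comul_list_prod_of_isPrimitive l hl, map_list_sum, Function.comp_def]

variable {α : Type*} (τ : H →ₗ[R] H) (halg1 : τ 1 = 1)
  (halgmul : ∀ x y : H, τ (x * y) = τ y * τ x) {p : α → H} (hfix : ∀ i, τ (p i) = p i)
include halg1 halgmul hfix

theorem psi_zero_map_prod (b : Bool) (w : List α) :
    psi τ 0 b (w.map p).prod = ((orient b w).map p).prod := by
  cases b
  · simp [psi_zero, orient, map_list_prod_of_antimorph τ halg1 halgmul, Function.comp_def, hfix]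
  · simp [psi_zero, orient]

theorem psi_map_prod (hprim : ∀ i, IsPrimitive R (p i)) (n : ℕ) (b : Bool) (w : List α) :
    psi τ n b (w.map p).prod = ((psiWords n b w).map fun m => (m.map p).prod).sum := by
  induction n generalizing b w with
  | zero => simp [psiWords, psi_zero_map_prod τ halg1 halgmul hfix]
  | succ n ih =>
    have hw : ∀ x ∈ w.map p, IsPrimitive R x := by
      simp only [mem_map]
      rintro _ ⟨i, _, rfl⟩
      exact hprim i
    rw [psi_succ, convProd_list_prod_of_isPrimitive _ _ _ hw, unshuffles_map, psiWords,
      map_flatMap, sum_flatMap, map_map]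
    refine congrArg sum (map_congr_left fun s _ => ?_)
    simp [psi_zero_map_prod τ halg1 halgmul hfix, ih, ← sum_map_mul_left, Function.comp_def]

end Bialgebra

section Symmetrisation

open List

variable {M : Type*} [AddCommMonoid M] {k : ℕ}

theorem exists_ofFn_eq_of_perm_finRange {ρ : List (Fin k)} (h : ρ ~ finRange k) :
    ∃ e : Equiv.Perm (Fin k), ofFn e = ρ := by
  have hlen : ρ.length = k := by simpa using h.length_eq
  let e := (finCongr hlen.symm).trans
    ((h.nodup_iff.mpr (nodup_finRange k)).getEquivOfForallMemList ρ fun i => by simp [h.mem_iff])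
  exact ⟨e, by rw [ofFn_congr hlen.symm]; exact ofFn_get ρ⟩

theorem sum_perm_map_of_perm_finRange (W : List (Fin k) → M) {ρ : List (Fin k)}
    (h : ρ ~ finRange k) :
    ∑ σ : Equiv.Perm (Fin k), W (ρ.map σ) = ∑ σ : Equiv.Perm (Fin k), W (ofFn σ) := by
  obtain ⟨e, rfl⟩ := exists_ofFn_eq_of_perm_finRange h
  simpa [map_ofFn] using Equiv.sum_comp (Equiv.mulRight e) fun σ => W (ofFn σ)

theorem sum_perm_sum_map_of_perm_finRange (W : List (Fin k) → M) (P : List (List (Fin k)))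
    (hP : ∀ ρ ∈ P, ρ ~ finRange k) :
    ∑ σ : Equiv.Perm (Fin k), (P.map fun ρ => W (ρ.map σ)).sum =
      P.length • ∑ σ : Equiv.Perm (Fin k), W (ofFn σ) := by
  induction P with
  | nil => simp
  | cons ρ P ih =>
    simp only [map_cons, sum_cons, Finset.sum_add_distrib, length_cons, succ_nsmul,
      sum_perm_map_of_perm_finRange W (hP ρ mem_cons_self),
      ih fun ρ' h => hP ρ' (mem_cons_of_mem ρ h), add_comm]

end Symmetrisation

theorem psi_sum_perm_prod {R H : Type*} [CommRing R] [Ring H] [Bialgebra R H]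
    (τ : H →ₗ[R] H) (halg1 : τ 1 = 1) (halgmul : ∀ x y : H, τ (x * y) = τ y * τ x)
    {k : ℕ} {p : Fin k → H} (hprim : ∀ i, IsPrimitive R (p i)) (hfix : ∀ i, τ (p i) = p i)
    (n : ℕ) (b : Bool) :
    psi τ n b (∑ σ : Equiv.Perm (Fin k), (List.ofFn fun i => p (σ i)).prod) =
      (n + 1 : R) ^ k • ∑ σ : Equiv.Perm (Fin k), (List.ofFn fun i => p (σ i)).prod := by
  have hword (σ : Equiv.Perm (Fin k)) :
      (List.ofFn fun i => p (σ i)) = ((List.finRange k).map σ).map p := by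
    rw [List.map_map, List.ofFn_eq_map]; rfl
  simp only [hword]
  calc psi τ n b (∑ σ : Equiv.Perm (Fin k), (((List.finRange k).map σ).map p).prod)
      = ∑ σ : Equiv.Perm (Fin k),
          ((psiWords n b (List.finRange k)).map fun ρ => ((ρ.map σ).map p).prod).sum := by
        rw [map_sum]
        refine Finset.sum_congr rfl fun σ _ => ?_
        rw [psi_map_prod τ halg1 halgmul hfix hprim, psiWords_map, List.map_map]
        rfl
    _ = (psiWords n b (List.finRange k)).length •
          ∑ σ : Equiv.Perm (Fin k), ((List.ofFn σ).map p).prod :=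
        sum_perm_sum_map_of_perm_finRange (fun l => (l.map p).prod) _
          fun _ => perm_of_mem_psiWords
    _ = (n + 1 : R) ^ k • ∑ σ : Equiv.Perm (Fin k), (((List.finRange k).map σ).map p).prod := by
        rw [length_psiWords, List.length_finRange, ← Nat.cast_smul_eq_nsmul R]
        simp [List.ofFn_eq_map]

theorem symmetrised_product_eigenvector_of_algebra_antimorphism_general
    {R H : Type*} [CommRing R] [Ring H] [Bialgebra R H]
    (τ : H →ₗ[R] H)
    (halg1 : τ 1 = 1) (halgmul : ∀ x y : H, τ (x * y) = τ y * τ x)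
    (k : ℕ) (p : Fin k → H)
    (hprim : ∀ i, IsPrimitive R (p i))
    (hfix : ∀ i, τ (p i) = p i)
    (a : ℕ) (ha : 1 ≤ a) :
    PsiPlus τ a (∑ σ : Equiv.Perm (Fin k), (List.ofFn fun i => p (σ i)).prod) =
        ((a : R)) ^ k • (∑ σ : Equiv.Perm (Fin k), (List.ofFn fun i => p (σ i)).prod) ∧
    PsiMinus τ a (∑ σ : Equiv.Perm (Fin k), (List.ofFn fun i => p (σ i)).prod) =
        ((a : R)) ^ k • (∑ σ : Equiv.Perm (Fin k), (List.ofFn fun i => p (σ i)).prod) := by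
  obtain ⟨n, rfl⟩ : ∃ n, a = n + 1 := ⟨a - 1, by omega⟩
  push_cast
  exact ⟨psi_sum_perm_prod τ halg1 halgmul hprim hfix n true,
    psi_sum_perm_prod τ halg1 halgmul hprim hfix n false⟩

/-- if `τ` is a linear involution on a bialgebra `H` that is an algebra
antimorphism and a coalgebra (anti)morphism, and `p_1, …, p_k` are `τ`-invariant primitives,
then the symmetrised product `v = Σ_{σ ∈ S_k} p_{σ(1)}⋯p_{σ(k)}` satisfies
`Ψ_a^+(v) = (a·1_R)^k • v` and `Ψ_a^−(v) = (a·1_R)^k • v` for every `a ≥ 1`. -/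
theorem symmetrised_product_eigenvector_of_algebra_antimorphism
    {R H : Type*} [CommRing R] [Ring H] [Bialgebra R H]
    (τ : H →ₗ[R] H)
    (hinv : ∀ x, τ (τ x) = x)
    (halg1 : τ 1 = 1) (halgmul : ∀ x y : H, τ (x * y) = τ y * τ x)
    (hco : IsCoalgMorph τ ∨ IsCoalgAntimorph τ)
    (k : ℕ) (p : Fin k → H)
    (hprim : ∀ i, IsPrimitive R (p i))
    (hfix : ∀ i, τ (p i) = p i)
    (a : ℕ) (ha : 1 ≤ a) :
    PsiPlus τ a (∑ σ : Equiv.Perm (Fin k), (List.ofFn fun i => p (σ i)).prod) =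
        ((a : R)) ^ k • (∑ σ : Equiv.Perm (Fin k), (List.ofFn fun i => p (σ i)).prod) ∧
    PsiMinus τ a (∑ σ : Equiv.Perm (Fin k), (List.ofFn fun i => p (σ i)).prod) =
        ((a : R)) ^ k • (∑ σ : Equiv.Perm (Fin k), (List.ofFn fun i => p (σ i)).prod) :=
  symmetrised_product_eigenvector_of_algebra_antimorphism_general τ halg1 halgmul k p hprim hfix a
    ha
end

section
/- Let H be a bialgebra over a commutative ring R and let τ : H → H be an R-linear involution that is an algebra antimorphism and is either a coalgebra morphism or a coalgebra antimorphism. Let p̄ ∈ H be primitive with τ(p̄) = −p̄, and let s = p_1⋯p_m be any product of primitive elements of H (m ≥ 0; s = 1 when m = 0). Then for every even integer a ≥ 2: Ψ_a^+(s p̄) = 0 and Ψ_a^−(p̄ s) = 0. -/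
open TensorProduct

/-! For primitive `p`, `Δ (x * p) = Δ x * (1 ⊗ p + p ⊗ 1)`, so convolution obeys the Leibniz
rule `(f * g) ∘ Rₚ = f * (g ∘ Rₚ) + (f ∘ Rₚ) * g`, and likewise for left multiplication `Lₚ`.
An antimorphism `τ` with `τ p̄ = -p̄` satisfies `τ ∘ Rₚ̄ = -(Lₚ̄ ∘ τ)` and `τ ∘ Lₚ̄ = -(Rₚ̄ ∘ τ)`.
Fed into the recursion, these make the two Leibniz terms cancel at every other step:
for odd `a`, `Ψ_a^− ∘ Rₚ̄ = -(Lₚ̄ ∘ Ψ_a^−)` and `Ψ_a^+ ∘ Lₚ̄ = Lₚ̄ ∘ Ψ_a^+`, while for even `a`,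
`Ψ_a^+ ∘ Rₚ̄ = 0` and `Ψ_a^− ∘ Lₚ̄ = 0`. Hence `Ψ_a^+ (s p̄) = 0 = Ψ_a^− (p̄ s)` for every `s`. -/

open LinearMap

section Convolution

variable {R H : Type*} [CommRing R] [Ring H] [Bialgebra R H]

lemma convProd_apply (f g : H →ₗ[R] H) (x : H) :
    convProd f g x = mul' R H (TensorProduct.map f g (Coalgebra.comul x)) := rfl

lemma convProd_zero_right (f : H →ₗ[R] H) : convProd f 0 = 0 := by
  ext x; simp [convProd_apply]

lemma convProd_neg_left (f g : H →ₗ[R] H) : convProd (-f) g = -convProd f g := by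
  simp only [convProd, ← neg_comp, ← comp_assoc]
  congr 1
  exact TensorProduct.ext' fun y z => by simp

lemma convProd_neg_right (f g : H →ₗ[R] H) : convProd f (-g) = -convProd f g := by
  simp only [convProd, ← neg_comp, ← comp_assoc]
  congr 1
  exact TensorProduct.ext' fun y z => by simp

lemma mulLeft_comp_convProd (p : H) (f g : H →ₗ[R] H) :
    mulLeft R p ∘ₗ convProd f g = convProd (mulLeft R p ∘ₗ f) g := by
  simp only [convProd, ← comp_assoc]
  congr 1
  exact TensorProduct.ext' fun y z => by simp [mul_assoc]

lemma convProd_mulRight_comp (p : H) (f g : H →ₗ[R] H) :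
    convProd (mulRight R p ∘ₗ f) g = convProd f (mulLeft R p ∘ₗ g) := by
  simp only [convProd, ← comp_assoc]
  congr 1
  exact TensorProduct.ext' fun y z => by simp [mul_assoc]

lemma IsPrimitive.convProd_comp_mulRight {p : H} (hp : IsPrimitive R p) (f g : H →ₗ[R] H) :
    convProd f g ∘ₗ mulRight R p =
      convProd f (g ∘ₗ mulRight R p) + convProd (f ∘ₗ mulRight R p) g := by
  ext x
  rw [IsPrimitive] at hp
  simp only [convProd_apply, comp_apply, LinearMap.add_apply, mulRight_apply,
    Bialgebra.comul_mul, hp]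
  induction Coalgebra.comul (R := R) x using TensorProduct.induction_on with
  | zero => simp
  | tmul y z => simp [mul_add]
  | add t₁ t₂ h₁ h₂ => simp only [add_mul, map_add, h₁, h₂]; abel

lemma IsPrimitive.convProd_comp_mulLeft {p : H} (hp : IsPrimitive R p) (f g : H →ₗ[R] H) :
    convProd f g ∘ₗ mulLeft R p =
      convProd f (g ∘ₗ mulLeft R p) + convProd (f ∘ₗ mulLeft R p) g := by
  ext x
  rw [IsPrimitive] at hp
  simp only [convProd_apply, comp_apply, LinearMap.add_apply, mulLeft_apply,
    Bialgebra.comul_mul, hp]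
  induction Coalgebra.comul (R := R) x using TensorProduct.induction_on with
  | zero => simp
  | tmul y z => simp [add_mul]
  | add t₁ t₂ h₁ h₂ => simp only [mul_add, map_add, h₁, h₂]; abel

end Convolution

section Psi

variable {R H : Type*} [CommRing R] [Ring H] [Bialgebra R H] {τ : H →ₗ[R] H} {p : H}

lemma comp_mulRight_of_antimorphism (halgmul : ∀ x y : H, τ (x * y) = τ y * τ x)
    (hneg : τ p = -p) : τ ∘ₗ mulRight R p = -(mulLeft R p ∘ₗ τ) := by
  ext x; simp [halgmul, hneg]

lemma comp_mulLeft_of_antimorphism (halgmul : ∀ x y : H, τ (x * y) = τ y * τ x)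
    (hneg : τ p = -p) : τ ∘ₗ mulLeft R p = -(mulRight R p ∘ₗ τ) := by
  ext x; simp [halgmul, hneg]

lemma psiAux_succ_comp_eq_zero (hp : IsPrimitive R p)
    (hτL : τ ∘ₗ mulLeft R p = -(mulRight R p ∘ₗ τ)) {n : ℕ}
    (hminus : (PsiAux τ n).2 ∘ₗ mulRight R p = -(mulLeft R p ∘ₗ (PsiAux τ n).2))
    (hplus : (PsiAux τ n).1 ∘ₗ mulLeft R p = mulLeft R p ∘ₗ (PsiAux τ n).1) :
    (PsiAux τ (n + 1)).1 ∘ₗ mulRight R p = 0 ∧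
      (PsiAux τ (n + 1)).2 ∘ₗ mulLeft R p = 0 := by
  constructor
  · rw [PsiAux, hp.convProd_comp_mulRight, hminus, convProd_neg_right,
      ← convProd_mulRight_comp, comp_id, id_comp, neg_add_cancel]
  · rw [PsiAux, hp.convProd_comp_mulLeft, hplus, hτL, convProd_neg_left,
      ← convProd_mulRight_comp, add_neg_cancel]

lemma psiAux_succ_comp_eq_mulLeft_comp (hp : IsPrimitive R p)
    (hτR : τ ∘ₗ mulRight R p = -(mulLeft R p ∘ₗ τ)) {n : ℕ}
    (hplus : (PsiAux τ n).1 ∘ₗ mulRight R p = 0)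
    (hminus : (PsiAux τ n).2 ∘ₗ mulLeft R p = 0) :
    (PsiAux τ (n + 1)).2 ∘ₗ mulRight R p = -(mulLeft R p ∘ₗ (PsiAux τ (n + 1)).2) ∧
      (PsiAux τ (n + 1)).1 ∘ₗ mulLeft R p = mulLeft R p ∘ₗ (PsiAux τ (n + 1)).1 := by
  constructor
  · rw [PsiAux, hp.convProd_comp_mulRight, hplus, hτR, convProd_zero_right, zero_add,
      convProd_neg_left, mulLeft_comp_convProd]
  · rw [PsiAux, hp.convProd_comp_mulLeft, hminus, convProd_zero_right, zero_add,
      mulLeft_comp_convProd, comp_id, id_comp]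

lemma psiAux_two_mul_comp_eq_mulLeft_comp (hp : IsPrimitive R p)
    (hτR : τ ∘ₗ mulRight R p = -(mulLeft R p ∘ₗ τ))
    (hτL : τ ∘ₗ mulLeft R p = -(mulRight R p ∘ₗ τ)) (n : ℕ) :
    (PsiAux τ (2 * n)).2 ∘ₗ mulRight R p = -(mulLeft R p ∘ₗ (PsiAux τ (2 * n)).2) ∧
      (PsiAux τ (2 * n)).1 ∘ₗ mulLeft R p = mulLeft R p ∘ₗ (PsiAux τ (2 * n)).1 := by
  induction n with
  | zero => exact ⟨hτR, by simp [PsiAux]⟩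
  | succ n ih =>
    obtain ⟨hplus, hminus⟩ := psiAux_succ_comp_eq_zero hp hτL ih.1 ih.2
    exact psiAux_succ_comp_eq_mulLeft_comp hp hτR hplus hminus

lemma psiAux_two_mul_add_one_comp_eq_zero (hp : IsPrimitive R p)
    (hτR : τ ∘ₗ mulRight R p = -(mulLeft R p ∘ₗ τ))
    (hτL : τ ∘ₗ mulLeft R p = -(mulRight R p ∘ₗ τ)) (n : ℕ) :
    (PsiAux τ (2 * n + 1)).1 ∘ₗ mulRight R p = 0 ∧
      (PsiAux τ (2 * n + 1)).2 ∘ₗ mulLeft R p = 0 :=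
  psiAux_succ_comp_eq_zero hp hτL (psiAux_two_mul_comp_eq_mulLeft_comp hp hτR hτL n).1
    (psiAux_two_mul_comp_eq_mulLeft_comp hp hτR hτL n).2

end Psi

theorem negating_primitive_annihilation_antimorphism_even_general
    {R H : Type*} [CommRing R] [Ring H] [Bialgebra R H]
    (τ : H →ₗ[R] H)
    (halgmul : ∀ x y : H, τ (x * y) = τ y * τ x)
    (pbar : H) (hpbar : IsPrimitive R pbar) (hneg : τ pbar = -pbar)
    (m : ℕ) (q : Fin m → H)
    (a : ℕ) (ha : 2 ≤ a) (haeven : Even a) :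
    PsiPlus τ a ((List.ofFn q).prod * pbar) = 0 ∧
    PsiMinus τ a (pbar * (List.ofFn q).prod) = 0 := by
  obtain ⟨k, rfl⟩ : ∃ k, a = 2 * k + 2 := by
    obtain ⟨r, rfl⟩ := haeven
    exact ⟨r - 1, by omega⟩
  obtain ⟨hplus, hminus⟩ := psiAux_two_mul_add_one_comp_eq_zero hpbar
    (comp_mulRight_of_antimorphism halgmul hneg) (comp_mulLeft_of_antimorphism halgmul hneg) k
  exact ⟨LinearMap.congr_fun hplus _, LinearMap.congr_fun hminus _⟩

/-- if `τ` is a linear involution on a bialgebra `H` that is an algebra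
antimorphism and a coalgebra (anti)morphism, `p̄` is a primitive with `τ(p̄) = −p̄`, and
`s = p_1⋯p_m` is any product of primitives, then for every even `a ≥ 2`:
`Ψ_a^+(sp̄) = 0` and `Ψ_a^−(p̄s) = 0`. -/
theorem negating_primitive_annihilation_antimorphism_even
    {R H : Type*} [CommRing R] [Ring H] [Bialgebra R H]
    (τ : H →ₗ[R] H)
    (hinv : ∀ x, τ (τ x) = x)
    (halg1 : τ 1 = 1) (halgmul : ∀ x y : H, τ (x * y) = τ y * τ x)
    (hco : IsCoalgMorph τ ∨ IsCoalgAntimorph τ)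
    (pbar : H) (hpbar : IsPrimitive R pbar) (hneg : τ pbar = -pbar)
    (m : ℕ) (q : Fin m → H) (hq : ∀ i, IsPrimitive R (q i))
    (a : ℕ) (ha : 2 ≤ a) (haeven : Even a) :
    PsiPlus τ a ((List.ofFn q).prod * pbar) = 0 ∧
    PsiMinus τ a (pbar * (List.ofFn q).prod) = 0 :=
  negating_primitive_annihilation_antimorphism_even_general τ halgmul pbar hpbar hneg m q a ha
    haeven
end

section
/- For every natural number n ≥ 1, the polynomial identity Σ_{k=0}^{n} C(n, k, 0) · X^k = X(X+2)(X+4)⋯(X+2n−2) = ∏_{i=0}^{n−1} (X + 2i) holds in ℤ[X]. -/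
/-- The order `≺` on signed letters: `x ≺ y` iff `|x| < |y|`, or `|x| = |y|` with `x`
barred (negative) and `y` unbarred. -/
def SPrec (x y : ℤ) : Prop := x.natAbs < y.natAbs ∨ (x.natAbs = y.natAbs ∧ x < y)

/-- `w : Fin n → ℤ` is a signed permutation of `n`: each entry has absolute value in
`{1,…,n}` and the absolute values are pairwise distinct (hence a permutation of `1,…,n`);
in particular every entry is nonzero. -/
def IsSignedPerm {n : ℕ} (w : Fin n → ℤ) : Prop :=
  (∀ t, 1 ≤ (w t).natAbs ∧ (w t).natAbs ≤ n) ∧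
    Function.Injective fun t => (w t).natAbs

/-- Position `t` is a left-to-right minimum of `w`: `w t ≺ w s` for all `s < t`. -/
def IsLRMin {n : ℕ} (w : Fin n → ℤ) (t : Fin n) : Prop :=
  ∀ s, s < t → SPrec (w t) (w s)

/-- Position `t` lies in the Lyndon factor beginning at position `m`: `m ≤ t` and no
left-to-right minimum occurs strictly between `m` (exclusive) and `t` (inclusive). -/
def InFactor {n : ℕ} (w : Fin n → ℤ) (m t : Fin n) : Prop :=
  m ≤ t ∧ ∀ s, m < s → s ≤ t → ¬ IsLRMin w s

/-- The number of barred (negative) entries in the Lyndon factor of `w` beginning at `m`. -/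
noncomputable def barredCount {n : ℕ} (w : Fin n → ℤ) (m : Fin n) : ℕ :=
  Nat.card { t : Fin n // InFactor w m t ∧ w t < 0 }

/-- The number of Lyndon factors of `w` with an odd number of barred entries. -/
noncomputable def numOddFactors {n : ℕ} (w : Fin n → ℤ) : ℕ :=
  Nat.card { m : Fin n // IsLRMin w m ∧ Odd (barredCount w m) }

/-- The number of Lyndon factors of `w` with an even number of barred entries. -/
noncomputable def numEvenFactors {n : ℕ} (w : Fin n → ℤ) : ℕ :=
  Nat.card { m : Fin n // IsLRMin w m ∧ Even (barredCount w m) }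

/-- `C(n, k, k̄)`: the number of signed permutations of `n` whose Lyndon factorization has
exactly `k` factors with an odd number of barred entries and exactly `k̄` factors with an
even number of barred entries. -/
noncomputable def bigC (n k kb : ℕ) : ℕ :=
  Nat.card { w : Fin n → ℤ // IsSignedPerm w ∧ numOddFactors w = k ∧ numEvenFactors w = kb }

/-- `c(n, k)`: the signless Stirling number of the first kind, i.e. the number of
permutations of `(1,…,n)` with exactly `k` left-to-right minima. -/
noncomputable def littleC (n k : ℕ) : ℕ :=
  Nat.card { σ : Equiv.Perm (Fin n) //
    Nat.card { t : Fin n // ∀ s, s < t → σ t < σ s } = k }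

/-!
Write a signed permutation as a pair `(σ, ε)` of a permutation and a set of bars. Its
left-to-right minima are the lower records of `σ`, whatever `ε` is, so the Lyndon factors depend
on `σ` alone. Asking every factor to contain an odd number of bars leaves the bars off the factor
starts free and forces the bar at each start: `2 ^ (n - k)` choices when `σ` has `k` records, so
`C(n, k, 0) = 2 ^ (n - k) c(n, k)`. Inserting the largest value into a permutation of `n - 1`
letters creates a new record exactly when it goes first, whence
`∑ σ, x ^ rec σ * y ^ (n - rec σ) = ∏ i < n, (x + i y)`; take `x = X`, `y = 2`.
-/

open Finset Function Equiv Polynomial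

section OddFibres

variable {α β : Type*} [Fintype α] [DecidableEq α] [DecidableEq β]
  {f : α → β} {s : β → α}

theorem card_filter_fibre_eq_add (hs : LeftInverse f s) (ε : α → Bool) (b : β) :
    #{a | f a = b ∧ ε a = true} =
      #{a | f a = b ∧ a ≠ s b ∧ ε a = true} + (ε (s b)).toNat := by
  have herase : ({a | f a = b ∧ a ≠ s b ∧ ε a = true} : Finset α) =
      ({a | f a = b ∧ ε a = true} : Finset α).erase (s b) := by
    ext a; simp only [mem_filter, mem_univ, true_and, mem_erase]; tauto
  rw [herase]
  cases h : ε (s b)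
  · rw [erase_eq_of_notMem (by simp [h]), Bool.toNat_false, add_zero]
  · rw [Bool.toNat_true, card_erase_add_one (by simp [h, hs b])]

theorem odd_card_filter_fibre_iff (hs : LeftInverse f s) (ε : α → Bool) (b : β) :
    Odd #{a | f a = b ∧ ε a = true} ↔
      ε (s b) = decide (Even #{a | f a = b ∧ a ≠ s b ∧ ε a = true}) := by
  rw [card_filter_fibre_eq_add hs]
  cases ε (s b) <;> simp [Nat.odd_add_one, ← Nat.not_odd_iff_even]

theorem card_filter_fibre_congr {ε ε' : α → Bool} (h : ∀ a, s (f a) ≠ a → ε a = ε' a)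
    (b : β) :
    #{a | f a = b ∧ a ≠ s b ∧ ε a = true} = #{a | f a = b ∧ a ≠ s b ∧ ε' a = true} := by
  refine congrArg card (filter_congr fun a _ => and_congr_right fun hab => and_congr_right
    fun has => ?_)
  rw [h a (hab ▸ Ne.symm has)]

def extendByFalse (g : {a // s (f a) ≠ a} → Bool) (a : α) : Bool :=
  if h : s (f a) = a then false else g ⟨a, h⟩

/-- On the section, the colour is forced by the parity of the rest of the fibre. -/
def oddFibreExtend (g : {a // s (f a) ≠ a} → Bool) (a : α) : Bool :=
  if s (f a) = a then decide (Even #{x | f x = f a ∧ x ≠ s (f a) ∧ extendByFalse g x = true})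
  else extendByFalse g a

def oddFibreEquiv (hs : LeftInverse f s) :
    {ε : α → Bool // ∀ b, Odd #{a | f a = b ∧ ε a = true}} ≃ ({a // s (f a) ≠ a} → Bool) where
  toFun ε a := ε.1 a
  invFun g := ⟨oddFibreExtend g, fun b => by
    rw [odd_card_filter_fibre_iff hs,
      card_filter_fibre_congr (f := f) (s := s) (ε' := extendByFalse g)]
    · simp [oddFibreExtend, hs b]
    · intro a ha; simp [oddFibreExtend, ha]⟩
  left_inv ε := by
    obtain ⟨ε, hε⟩ := ε
    ext a
    simp only [oddFibreExtend]
    split_ifs with ha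
    · rw [card_filter_fibre_congr (f := f) (s := s) (ε' := ε) (fun x hx => by
        simp [extendByFalse, hx]), ← (odd_card_filter_fibre_iff hs ε (f a)).1 (hε (f a)), ha]
    · simp [extendByFalse, ha]
  right_inv g := by
    funext a
    simp [oddFibreExtend, extendByFalse, a.2]

theorem card_colourings_all_fibres_odd [Fintype β] (hs : LeftInverse f s) :
    Fintype.card {ε : α → Bool // ∀ b, Odd #{a | f a = b ∧ ε a = true}} =
      2 ^ (Fintype.card α - Fintype.card β) := by
  have hsection : {a // s (f a) = a} ≃ β :=
    ⟨fun a => f a, fun b => ⟨s b, by rw [hs b]⟩, fun a => Subtype.ext a.2, hs⟩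
  rw [Fintype.card_congr (oddFibreEquiv hs), Fintype.card_fun, Fintype.card_bool,
    Fintype.card_subtype_compl, Fintype.card_congr hsection]

end OddFibres

variable {n : ℕ}

section LowerRecords

variable {β : Type*} [LinearOrder β]

/-- A left-to-right minimum of the word `u`. -/
def IsLowerRecord (u : Fin n → β) (t : Fin n) : Prop := ∀ s < t, u t < u s

instance (u : Fin n → β) : DecidablePred (IsLowerRecord u) :=
  fun t => inferInstanceAs (Decidable (∀ s < t, u t < u s))

def numLowerRecords (u : Fin n → β) : ℕ := #{t | IsLowerRecord u t}

theorem isLowerRecord_mk_zero (u : Fin n → β) (h : 0 < n) : IsLowerRecord u ⟨0, h⟩ :=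
  fun _ hs => absurd (Fin.lt_def.1 hs) (Nat.not_lt_zero _)

theorem numLowerRecords_le (u : Fin n → β) : numLowerRecords u ≤ n :=
  (card_filter_le _ _).trans (card_fin n).le

theorem filter_isLowerRecord_le_nonempty (u : Fin n → β) (t : Fin n) :
    (univ.filter fun m => m ≤ t ∧ IsLowerRecord u m).Nonempty :=
  ⟨⟨0, t.pos⟩,
    mem_filter.2 ⟨mem_univ _, Fin.le_def.2 (Nat.zero_le _), isLowerRecord_mk_zero u t.pos⟩⟩

/-- The start of the Lyndon factor containing `t`: the last lower record at or before `t`. -/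
def recordStart (u : Fin n → β) (t : Fin n) : Fin n :=
  (univ.filter fun m => m ≤ t ∧ IsLowerRecord u m).max' (filter_isLowerRecord_le_nonempty u t)

variable {u : Fin n → β}

theorem recordStart_le_and_isLowerRecord (t : Fin n) :
    recordStart u t ≤ t ∧ IsLowerRecord u (recordStart u t) :=
  (mem_filter.1 (max'_mem _ (filter_isLowerRecord_le_nonempty u t))).2

theorem le_recordStart {m t : Fin n} (hm : IsLowerRecord u m) (hmt : m ≤ t) :
    m ≤ recordStart u t :=
  le_max' _ m (by simp [hm, hmt])

theorem recordStart_eq_iff {m t : Fin n} (hm : IsLowerRecord u m) :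
    recordStart u t = m ↔ m ≤ t ∧ ∀ s, m < s → s ≤ t → ¬ IsLowerRecord u s := by
  obtain ⟨hle, hrec⟩ := recordStart_le_and_isLowerRecord (u := u) t
  constructor
  · rintro rfl
    exact ⟨hle, fun s hs hst hsrec => (le_recordStart hsrec hst).not_gt hs⟩
  · rintro ⟨hmt, hnone⟩
    by_contra hne
    exact hnone _ ((le_recordStart hm hmt).lt_of_ne' hne) hle hrec

theorem recordStart_of_isLowerRecord {m : Fin n} (hm : IsLowerRecord u m) :
    recordStart u m = m :=
  (recordStart_eq_iff hm).2 ⟨le_rfl, fun _ hs hsm => absurd hsm hs.not_ge⟩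

def factorOf (u : Fin n → β) (t : Fin n) : {m // IsLowerRecord u m} :=
  ⟨recordStart u t, (recordStart_le_and_isLowerRecord t).2⟩

theorem leftInverse_factorOf_val : LeftInverse (factorOf u) Subtype.val :=
  fun m => Subtype.ext (recordStart_of_isLowerRecord m.2)

end LowerRecords

/-- Insert the largest value `Fin.last n` at position `p`, keeping the relative order of `τ`. -/
def insertMax (p : Fin (n + 1)) (τ : Perm (Fin n)) : Perm (Fin (n + 1)) :=
  (finSuccEquiv' p).trans ((optionCongr τ).trans (finSuccEquiv' (Fin.last n)).symm)

theorem insertMax_apply_self (p : Fin (n + 1)) (τ : Perm (Fin n)) :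
    insertMax p τ p = Fin.last n := by
  simp [insertMax, finSuccEquiv'_at, finSuccEquiv'_symm_none]

theorem insertMax_apply_succAbove (p : Fin (n + 1)) (τ : Perm (Fin n)) (s : Fin n) :
    insertMax p τ (p.succAbove s) = (τ s).castSucc := by
  simp [insertMax, finSuccEquiv'_succAbove, finSuccEquiv'_symm_some, Fin.succAbove_last]

theorem isLowerRecord_insertMax_self (p : Fin (n + 1)) (τ : Perm (Fin n)) :
    IsLowerRecord (insertMax p τ) p ↔ p = 0 := by
  refine ⟨fun h => ?_, fun hp => hp ▸ isLowerRecord_mk_zero _ n.succ_pos⟩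
  by_contra hp
  have := h 0 (Fin.pos_of_ne_zero hp)
  rw [insertMax_apply_self] at this
  exact this.not_ge (Fin.le_last _)

theorem isLowerRecord_insertMax_succAbove (p : Fin (n + 1)) (τ : Perm (Fin n)) (s : Fin n) :
    IsLowerRecord (insertMax p τ) (p.succAbove s) ↔ IsLowerRecord τ s := by
  constructor
  · intro h s' hs'
    simpa [insertMax_apply_succAbove] using
      h (p.succAbove s') (Fin.succAbove_lt_succAbove_iff.2 hs')
  · intro h u hu
    rcases eq_or_ne u p with rfl | hup
    · rw [insertMax_apply_self, insertMax_apply_succAbove]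
      exact Fin.castSucc_lt_last _
    · obtain ⟨s', rfl⟩ := Fin.exists_succAbove_eq hup
      rw [insertMax_apply_succAbove, insertMax_apply_succAbove, Fin.castSucc_lt_castSucc_iff]
      exact h s' (Fin.succAbove_lt_succAbove_iff.1 hu)

theorem numLowerRecords_insertMax (p : Fin (n + 1)) (τ : Perm (Fin n)) :
    numLowerRecords (insertMax p τ) = numLowerRecords τ + if p = 0 then 1 else 0 := by
  simp only [numLowerRecords, card_filter, Fin.sum_univ_succAbove _ p,
    isLowerRecord_insertMax_self, isLowerRecord_insertMax_succAbove]
  rw [add_comm]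

theorem insertMax_injective :
    Injective fun x : Fin (n + 1) × Perm (Fin n) => insertMax x.1 x.2 := by
  rintro ⟨p, τ⟩ ⟨p', τ'⟩ h
  simp only at h
  have hp' : insertMax p τ p' = Fin.last n := by rw [h, insertMax_apply_self]
  obtain rfl : p' = p := (insertMax p τ).injective (hp'.trans (insertMax_apply_self p τ).symm)
  refine congrArg _ (Equiv.ext fun s => Fin.castSucc_injective _ ?_)
  rw [← insertMax_apply_succAbove p', ← insertMax_apply_succAbove p', h]

noncomputable def insertMaxEquiv : Fin (n + 1) × Perm (Fin n) ≃ Perm (Fin (n + 1)) :=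
  Equiv.ofBijective _ <| (Fintype.bijective_iff_injective_and_card _).2
    ⟨insertMax_injective, by simp [Fintype.card_perm, Nat.factorial_succ]⟩

/-- The homogenised generating function of the signless Stirling numbers of the first kind. -/
theorem sum_pow_numLowerRecords_mul_pow {R : Type*} [CommSemiring R] (x y : R) (n : ℕ) :
    ∑ σ : Perm (Fin n), x ^ numLowerRecords σ * y ^ (n - numLowerRecords σ) =
      ∏ i ∈ range n, (x + i * y) := by
  induction n with
  | zero => simp [numLowerRecords]
  | succ n ih =>
    have hzero (τ : Perm (Fin n)) :
        x ^ numLowerRecords (insertMax 0 τ) * y ^ (n + 1 - numLowerRecords (insertMax 0 τ)) =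
          x * (x ^ numLowerRecords τ * y ^ (n - numLowerRecords τ)) := by
      rw [numLowerRecords_insertMax, if_pos rfl, Nat.add_sub_add_right, pow_succ]; ring
    have hsucc (i : Fin n) (τ : Perm (Fin n)) :
        x ^ numLowerRecords (insertMax i.succ τ) *
            y ^ (n + 1 - numLowerRecords (insertMax i.succ τ)) =
          y * (x ^ numLowerRecords τ * y ^ (n - numLowerRecords τ)) := by
      rw [numLowerRecords_insertMax, if_neg (Fin.succ_ne_zero i), add_zero,
        Nat.sub_add_comm (numLowerRecords_le _), pow_succ]; ring
    rw [prod_range_succ, ← ih, ← insertMaxEquiv.sum_comp, Fintype.sum_prod_type,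
      Fin.sum_univ_succ]
    simp only [insertMaxEquiv, Equiv.ofBijective_apply, hzero, hsucc, ← mul_sum, sum_const,
      card_univ, Fintype.card_fin, nsmul_eq_mul]
    ring

def signedPerm (σ : Perm (Fin n)) (ε : Fin n → Bool) (t : Fin n) : ℤ :=
  if ε t then -((σ t : ℤ) + 1) else (σ t : ℤ) + 1

section SignedPerm

variable (σ : Perm (Fin n)) (ε : Fin n → Bool)

theorem natAbs_signedPerm (t : Fin n) : (signedPerm σ ε t).natAbs = σ t + 1 := by
  unfold signedPerm; split <;> omega

theorem signedPerm_neg_iff (t : Fin n) : signedPerm σ ε t < 0 ↔ ε t = true := by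
  unfold signedPerm; split <;> simp_all <;> omega

theorem isSignedPerm_signedPerm : IsSignedPerm (signedPerm σ ε) :=
  ⟨fun t => by rw [natAbs_signedPerm]; omega,
    fun a b hab => σ.injective (Fin.ext (by simpa [natAbs_signedPerm] using hab))⟩

/-- On letters with distinct absolute values, `≺` only compares absolute values. -/
theorem isLRMin_signedPerm_iff (t : Fin n) :
    IsLRMin (signedPerm σ ε) t ↔ IsLowerRecord σ t := by
  refine forall_congr' fun s => imp_congr_right fun hst => ?_
  have hne : (σ t : ℕ) ≠ σ s := fun h => hst.ne' (σ.injective (Fin.ext h))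
  simp only [SPrec, natAbs_signedPerm, Fin.lt_def]
  omega

theorem inFactor_signedPerm_iff {m : Fin n} (hm : IsLowerRecord σ m) (t : Fin n) :
    InFactor (signedPerm σ ε) m t ↔ recordStart σ t = m := by
  simp only [InFactor, isLRMin_signedPerm_iff, recordStart_eq_iff hm]

theorem barredCount_signedPerm {m : Fin n} (hm : IsLowerRecord σ m) :
    barredCount (signedPerm σ ε) m = #{t | recordStart σ t = m ∧ ε t = true} := by
  simp only [barredCount, inFactor_signedPerm_iff σ ε hm, signedPerm_neg_iff,
    Nat.card_eq_fintype_card, Fintype.card_subtype]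

end SignedPerm

noncomputable def IsSignedPerm.absPerm {w : Fin n → ℤ} (hw : IsSignedPerm w) : Perm (Fin n) :=
  Equiv.ofBijective (fun t => ⟨(w t).natAbs - 1, by have := hw.1 t; omega⟩) <|
    Finite.injective_iff_bijective.1 fun a b hab => hw.2 <| by
      have := hw.1 a; have := hw.1 b; simp only [Fin.mk.injEq] at hab; dsimp only; omega

theorem IsSignedPerm.absPerm_apply {w : Fin n → ℤ} (hw : IsSignedPerm w) (t : Fin n) :
    (hw.absPerm t : ℕ) = (w t).natAbs - 1 :=
  rfl

noncomputable def signedPermEquiv :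
    Perm (Fin n) × (Fin n → Bool) ≃ {w : Fin n → ℤ // IsSignedPerm w} where
  toFun p := ⟨signedPerm p.1 p.2, isSignedPerm_signedPerm p.1 p.2⟩
  invFun w := (w.2.absPerm, fun t => decide (w.1 t < 0))
  left_inv p := by
    obtain ⟨σ, ε⟩ := p
    refine Prod.ext (Equiv.ext fun t => Fin.ext ?_) (funext fun t => ?_)
    · simp [IsSignedPerm.absPerm_apply, natAbs_signedPerm]
    · simp [signedPerm_neg_iff]
  right_inv w := by
    obtain ⟨w, hw⟩ := w
    refine Subtype.ext (funext fun t => ?_)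
    have := (hw.1 t).1
    simp only [signedPerm, IsSignedPerm.absPerm_apply, decide_eq_true_eq]
    split <;> omega

theorem numOddFactors_eq_and_numEvenFactors_eq_zero_iff (w : Fin n → ℤ) (k : ℕ) :
    numOddFactors w = k ∧ numEvenFactors w = 0 ↔
      Nat.card {m // IsLRMin w m} = k ∧ ∀ m, IsLRMin w m → Odd (barredCount w m) := by
  have heven : numEvenFactors w = 0 ↔ ∀ m, IsLRMin w m → Odd (barredCount w m) := by
    rw [numEvenFactors, Finite.card_eq_zero_iff, isEmpty_subtype]
    simp only [not_and, Nat.not_even_iff_odd]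
  rw [heven]
  refine and_congr_left fun hodd => ?_
  rw [numOddFactors, Nat.card_congr (subtypeEquivRight fun m => and_iff_left_of_imp (hodd m))]

theorem card_signs_all_factors_odd (σ : Perm (Fin n)) (k : ℕ) :
    Nat.card {ε : Fin n → Bool //
        numOddFactors (signedPerm σ ε) = k ∧ numEvenFactors (signedPerm σ ε) = 0} =
      if numLowerRecords σ = k then 2 ^ (n - k) else 0 := by
  have hcond (ε : Fin n → Bool) :
      numOddFactors (signedPerm σ ε) = k ∧ numEvenFactors (signedPerm σ ε) = 0 ↔
        numLowerRecords σ = k ∧ ∀ b, Odd #{t | factorOf σ t = b ∧ ε t = true} := by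
    rw [numOddFactors_eq_and_numEvenFactors_eq_zero_iff,
      Nat.card_congr (subtypeEquivRight (isLRMin_signedPerm_iff σ ε)), Nat.card_eq_fintype_card,
      Fintype.card_subtype]
    refine and_congr Iff.rfl ?_
    simp only [isLRMin_signedPerm_iff, Subtype.forall, factorOf, Subtype.ext_iff]
    exact forall₂_congr fun m hm => by rw [barredCount_signedPerm σ ε hm]
  rw [Nat.card_congr (subtypeEquivRight hcond)]
  split_ifs with hk
  · rw [Nat.card_congr (subtypeEquivRight fun ε => and_iff_right hk), Nat.card_eq_fintype_card,
      card_colourings_all_fibres_odd leftInverse_factorOf_val, Fintype.card_fin,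
      Fintype.card_subtype, ← hk]
    rfl
  · simp [hk]

theorem bigC_zero_eq_sum (k : ℕ) :
    bigC n k 0 = ∑ σ : Perm (Fin n), if numLowerRecords σ = k then 2 ^ (n - k) else 0 := by
  calc bigC n k 0
      = Nat.card {p : Perm (Fin n) × (Fin n → Bool) //
          numOddFactors (signedPerm p.1 p.2) = k ∧ numEvenFactors (signedPerm p.1 p.2) = 0} :=
        Nat.card_congr ((subtypeSubtypeEquivSubtypeInter IsSignedPerm _).symm.trans
          (signedPermEquiv.subtypeEquiv fun _ => Iff.rfl).symm)
    _ = ∑ σ : Perm (Fin n), Nat.card {ε : Fin n → Bool //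
          numOddFactors (signedPerm σ ε) = k ∧ numEvenFactors (signedPerm σ ε) = 0} := by
        rw [Nat.card_congr (subtypeProdEquivSigmaSubtype fun σ ε =>
          numOddFactors (signedPerm σ ε) = k ∧ numEvenFactors (signedPerm σ ε) = 0),
          Nat.card_sigma]
    _ = _ := sum_congr rfl fun σ _ => card_signs_all_factors_odd σ k

theorem bigC_even_generating_function_general (n : ℕ) :
    ∑ k ∈ Finset.range (n + 1), Polynomial.C (bigC n k 0 : ℤ) * Polynomial.X ^ k =
      ∏ i ∈ Finset.range n, (Polynomial.X + Polynomial.C (2 * (i : ℤ))) := by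
  have hcoeff (σ : Perm (Fin n)) :
      ∑ k ∈ range (n + 1), C ((if numLowerRecords σ = k then 2 ^ (n - k) else 0 : ℕ) : ℤ) * X ^ k =
        X ^ numLowerRecords σ * 2 ^ (n - numLowerRecords σ) := by
    simp [apply_ite C, Nat.lt_succ_of_le (numLowerRecords_le _), mul_comm]
  calc ∑ k ∈ range (n + 1), C (bigC n k 0 : ℤ) * X ^ k
      = ∑ σ : Perm (Fin n), X ^ numLowerRecords σ * 2 ^ (n - numLowerRecords σ) := by
        simp only [bigC_zero_eq_sum, Nat.cast_sum, map_sum, sum_mul]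
        rw [sum_comm]
        exact sum_congr rfl fun σ _ => hcoeff σ
    _ = ∏ i ∈ range n, (X + (i : ℤ[X]) * 2) :=
        sum_pow_numLowerRecords_mul_pow (X : ℤ[X]) 2 n
    _ = _ := by simp [mul_comm]

/-- for `n ≥ 1`, in `ℤ[X]`:
`Σ_{k=0}^{n} C(n,k,0)·X^k = X(X+2)(X+4)⋯(X+2n−2) = ∏_{i=0}^{n−1}(X+2i)`. -/
theorem bigC_even_generating_function (n : ℕ) (hn : 1 ≤ n) :
    ∑ k ∈ Finset.range (n + 1), Polynomial.C (bigC n k 0 : ℤ) * Polynomial.X ^ k =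
      ∏ i ∈ Finset.range n, (Polynomial.X + Polynomial.C (2 * (i : ℤ))) :=
  bigC_even_generating_function_general n
end
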